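/- arXiv:2002.10316 — 3 statements merged into one kernel-verified Lean document; each statement's English description precedes it below -/
import Mathlib

section
/- Let γ ∈ [0,1) and let p : ℕ → [0,1] be a sequence of probabilities. Define the discounted frequency f(t) = (∑_{s=1}^{t} p(s) γ^{t-s}) / (∑_{s=1}^{t} γ^{t-s}). If for some t ≥ 1 and some constant p ∈ [0,1] we have p(t+1) = p(t+2) = ... = p(t+s) = p for all 1 ≤ s ≤ s_a, then |f(t+s_a) - p| = γ^{s_a} (1-γ^t)/(1-γ^{t+s_a}) · |f(t) - p| ≤ γ^{s_a}. -/
open Finset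

lemma geom_den (γ : ℝ) (hγ1 : γ < 1) (u : ℕ) :
    ∑ s ∈ Finset.Icc 1 u, γ ^ (u - s) = (1 - γ ^ u) / (1 - γ) := by
  have hne : γ ≠ 1 := ne_of_lt hγ1
  have h1 : ∑ s ∈ Finset.Icc 1 u, γ ^ (u - s) = ∑ i ∈ Finset.range u, γ ^ i := by
    rw [show Finset.Icc 1 u = Finset.Ico 1 (u+1) by rw [Finset.Ico_add_one_right_eq_Icc],
      Finset.sum_Ico_eq_sum_range]
    simp only [Nat.add_sub_cancel]
    have := Finset.sum_range_reflect (fun i => γ ^ i) u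
    rw [← this]
    apply Finset.sum_congr rfl
    intro i hi
    congr 1
    omega
  rw [h1, geom_sum_eq hne]
  rw [div_eq_div_iff (sub_ne_zero.mpr hne) (sub_ne_zero.mpr (by intro h; exact hne h.symm))]
  ring

/-- Contraction of the discounted frequency after playing a constant action for `sa` rounds. -/
theorem discounted_frequency_approach
    (γ : ℝ) (hγ0 : 0 ≤ γ) (hγ1 : γ < 1)
    (p : ℕ → ℝ) (hp : ∀ s, p s ∈ Set.Icc (0:ℝ) 1)
    (t sa : ℕ) (ht : 1 ≤ t) (hsa : 1 ≤ sa)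
    (pbar : ℝ) (hpbar : pbar ∈ Set.Icc (0:ℝ) 1)
    (hconst : ∀ s, 1 ≤ s → s ≤ sa → p (t + s) = pbar)
    (f : ℕ → ℝ)
    (hf : ∀ u, f u = (∑ s ∈ Finset.Icc 1 u, p s * γ ^ (u - s)) /
        (∑ s ∈ Finset.Icc 1 u, γ ^ (u - s))) :
    |f (t + sa) - pbar| = γ ^ sa * (1 - γ ^ t) / (1 - γ ^ (t + sa)) * |f t - pbar| ∧
      |f (t + sa) - pbar| ≤ γ ^ sa := by
  have h1γ : (0:ℝ) < 1 - γ := by linarith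
  have hpowlt : ∀ u : ℕ, 1 ≤ u → γ ^ u < 1 := fun u hu =>
    pow_lt_one₀ hγ0 hγ1 (by omega)
  have hDt : (0:ℝ) < 1 - γ ^ t := by have := hpowlt t ht; linarith
  have hDts : (0:ℝ) < 1 - γ ^ (t + sa) := by have := hpowlt (t + sa) (by omega); linarith
  -- denominators
  have hden : ∀ u, ∑ s ∈ Finset.Icc 1 u, γ ^ (u - s) = (1 - γ ^ u) / (1 - γ) :=
    geom_den γ hγ1
  have hdenpos : ∀ u : ℕ, 1 ≤ u → (0:ℝ) < ∑ s ∈ Finset.Icc 1 u, γ ^ (u - s) := by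
    intro u hu
    rw [hden u]
    exact div_pos (by have := hpowlt u hu; linarith) h1γ
  -- rewrite Icc 1 u as Ioc 0 u
  have hIoc : ∀ u : ℕ, Finset.Icc 1 u = Finset.Ioc 0 u := by
    intro u; ext x; simp; omega
  set A := ∑ s ∈ Finset.Icc 1 t, p s * γ ^ (t - s) with hA
  -- split of numerator
  have hsplit1 : ∑ s ∈ Finset.Icc 1 t, p s * γ ^ (t + sa - s)
      = γ ^ sa * A := by
    rw [hA, Finset.mul_sum]
    apply Finset.sum_congr rfl
    intro s hs
    simp only [Finset.mem_Icc] at hs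
    have : t + sa - s = (t - s) + sa := by omega
    rw [this, pow_add]; ring
  have hconst' : ∑ s ∈ Finset.Ioc t (t + sa), p s * γ ^ (t + sa - s)
      = pbar * ∑ s ∈ Finset.Ioc t (t + sa), γ ^ (t + sa - s) := by
    rw [Finset.mul_sum]
    apply Finset.sum_congr rfl
    intro s hs
    simp only [Finset.mem_Ioc] at hs
    have h1 : s = t + (s - t) := by omega
    rw [h1, hconst (s - t) (by omega) (by omega)]
  have hsplitnum : ∑ s ∈ Finset.Icc 1 (t + sa), p s * γ ^ (t + sa - s)
      = γ ^ sa * A + pbar * ∑ s ∈ Finset.Ioc t (t + sa), γ ^ (t + sa - s) := by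
    rw [hIoc, ← Finset.sum_Ioc_consecutive _ (Nat.zero_le t) (Nat.le_add_right t sa),
      ← hIoc, hsplit1, hconst']
  have hsplitden : ∑ s ∈ Finset.Icc 1 (t + sa), γ ^ (t + sa - s)
      = γ ^ sa * (∑ s ∈ Finset.Icc 1 t, γ ^ (t - s))
        + ∑ s ∈ Finset.Ioc t (t + sa), γ ^ (t + sa - s) := by
    rw [hIoc, ← Finset.sum_Ioc_consecutive _ (Nat.zero_le t) (Nat.le_add_right t sa),
      ← hIoc]
    congr 1
    rw [Finset.mul_sum]
    apply Finset.sum_congr rfl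
    intro s hs
    simp only [Finset.mem_Icc] at hs
    have : t + sa - s = (t - s) + sa := by omega
    rw [this, pow_add]; ring
  have hIocval : ∑ s ∈ Finset.Ioc t (t + sa), γ ^ (t + sa - s)
      = (1 - γ ^ (t + sa)) / (1 - γ) - γ ^ sa * ((1 - γ ^ t) / (1 - γ)) := by
    have := hsplitden
    rw [hden (t + sa), hden t] at this
    linarith
  -- f t bounds
  have hfA0 : 0 ≤ A := by
    apply Finset.sum_nonneg
    intro s hs
    exact mul_nonneg (hp s).1 (pow_nonneg hγ0 _)
  have hfA1 : A ≤ (1 - γ ^ t) / (1 - γ) := by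
    rw [← hden t]
    apply Finset.sum_le_sum
    intro s hs
    nth_rewrite 2 [← one_mul (γ ^ (t - s))]
    exact mul_le_mul_of_nonneg_right (hp s).2 (pow_nonneg hγ0 _)
  have hft : f t = A / ((1 - γ ^ t) / (1 - γ)) := by rw [hf t, hden t]
  have hftmem : 0 ≤ f t ∧ f t ≤ 1 := by
    constructor
    · rw [hft]; exact div_nonneg hfA0 (le_of_lt (div_pos hDt h1γ))
    · rw [hft]
      rw [div_le_one (div_pos hDt h1γ)]
      exact hfA1
  -- key identity
  have hkey : f (t + sa) - pbar = γ ^ sa * (1 - γ ^ t) / (1 - γ ^ (t + sa)) * (f t - pbar) := by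
    rw [hf (t + sa), hft, hsplitnum, hden (t + sa), hIocval]
    field_simp
    ring
  have hcnonneg : 0 ≤ γ ^ sa * (1 - γ ^ t) / (1 - γ ^ (t + sa)) :=
    div_nonneg (mul_nonneg (pow_nonneg hγ0 _) (le_of_lt hDt)) (le_of_lt hDts)
  have habs : |f (t + sa) - pbar| = γ ^ sa * (1 - γ ^ t) / (1 - γ ^ (t + sa)) * |f t - pbar| := by
    rw [hkey, abs_mul, abs_of_nonneg hcnonneg]
  refine ⟨habs, ?_⟩
  rw [habs]
  have h1 : |f t - pbar| ≤ 1 := by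
    rw [abs_le]
    constructor <;> [skip; skip] <;>
      · obtain ⟨h0, hone⟩ := hftmem
        obtain ⟨hb0, hb1⟩ := hpbar
        linarith
  have h2 : γ ^ sa * (1 - γ ^ t) / (1 - γ ^ (t + sa)) ≤ γ ^ sa := by
    rw [div_le_iff₀ hDts]
    have hmono : γ ^ (t + sa) ≤ γ ^ t := pow_le_pow_of_le_one hγ0 (le_of_lt hγ1) (by omega)
    nlinarith [pow_nonneg hγ0 sa]
  calc γ ^ sa * (1 - γ ^ t) / (1 - γ ^ (t + sa)) * |f t - pbar|
      ≤ γ ^ sa * (1 - γ ^ t) / (1 - γ ^ (t + sa)) * 1 :=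
        mul_le_mul_of_nonneg_left h1 hcnonneg
    _ = γ ^ sa * (1 - γ ^ t) / (1 - γ ^ (t + sa)) := by ring
    _ ≤ γ ^ sa := h2
end

section
/- Fix a, b > 0 with a + b = 1. Let f(x, α) = x^{aα}(1-x)^{bα} / B(aα+1, bα+1) be the density of the Beta(aα+1, bα+1) distribution on [0,1]. Then for any continuous g : [0,1] → ℝ, lim_{α→∞} ∫_0^1 f(x,α) g(x) dx = g(a); i.e., Beta(aα+1, bα+1) converges weakly to the Dirac mass at a as α → ∞. -/
open MeasureTheory Filter
open Set

/-- The Beta function via Gamma functions. -/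
noncomputable def betaFn (u v : ℝ) : ℝ := Real.Gamma u * Real.Gamma v / Real.Gamma (u + v)

lemma betaFn_eq_integral {u v : ℝ} (hu : 0 < u) (hv : 0 < v) :
    betaFn u v = ∫ x in Set.Icc (0:ℝ) 1, x ^ (u - 1) * (1 - x) ^ (v - 1) := by
  have key : Complex.betaIntegral u v =
      ((∫ x in (0:ℝ)..1, x ^ (u - 1) * (1 - x) ^ (v - 1)) : ℝ) := by
    rw [Complex.betaIntegral, ← intervalIntegral.integral_ofReal]
    apply intervalIntegral.integral_congr
    intro x hx
    rw [Set.uIcc_of_le (by norm_num : (0:ℝ) ≤ 1)] at hx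
    push_cast
    rw [Complex.ofReal_cpow hx.1, Complex.ofReal_cpow (by linarith [hx.2] : (0:ℝ) ≤ 1 - x)]
    push_cast
    ring
  have hG := Complex.Gamma_mul_Gamma_eq_betaIntegral
    (by simpa using hu : 0 < Complex.re u) (by simpa using hv : 0 < Complex.re v)
  rw [key] at hG
  rw [Complex.Gamma_ofReal, Complex.Gamma_ofReal, ← Complex.ofReal_add, Complex.Gamma_ofReal,
    ← Complex.ofReal_mul, ← Complex.ofReal_mul, Complex.ofReal_inj] at hG
  have hGuv : 0 < Real.Gamma (u + v) := Real.Gamma_pos_of_pos (by linarith)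
  have : betaFn u v = ∫ x in (0:ℝ)..1, x ^ (u - 1) * (1 - x) ^ (v - 1) := by
    rw [betaFn, hG]
    field_simp
  rw [this, intervalIntegral.integral_of_le zero_le_one,
    MeasureTheory.integral_Icc_eq_integral_Ioc]

/-- The `Beta(aα+1, bα+1)` distribution concentrates at `a` as `α → ∞` when `a + b = 1`:
for every continuous test function `g` on `[0,1]`, the integral of `g` against the
Beta density tends to `g a`. -/
theorem beta_concentrates_at_mode
    (a b : ℝ) (ha : 0 < a) (hb : 0 < b) (hab : a + b = 1)
    (g : ℝ → ℝ) (hg : ContinuousOn g (Set.Icc (0:ℝ) 1)) :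
    Tendsto
      (fun α : ℝ => ∫ x in Set.Icc (0:ℝ) 1,
        (x ^ (a * α) * (1 - x) ^ (b * α) / betaFn (a * α + 1) (b * α + 1)) * g x)
      atTop (nhds (g a)) := by
  set s : Set ℝ := Set.Icc (0:ℝ) 1 with hs_def
  have hs : MeasurableSet s := measurableSet_Icc
  have ha1 : a < 1 := by linarith
  have haI : a ∈ s := ⟨ha.le, ha1.le⟩
  have hba : 1 - a = b := by linarith
  set c : ℝ → ℝ := fun x => x ^ a * (1 - x) ^ b with hc_def
  -- continuity of c on s
  have hc_cont : ContinuousOn c s := by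
    apply ContinuousOn.mul
    · exact continuousOn_id.rpow_const (fun x _ => Or.inr ha.le)
    · exact (continuousOn_const.sub continuousOn_id).rpow_const (fun x _ => Or.inr hb.le)
  have hc_nonneg : ∀ x ∈ s, 0 ≤ c x := fun x hx =>
    mul_nonneg (Real.rpow_nonneg hx.1 _) (Real.rpow_nonneg (by linarith [hx.2]) _)
  have hca_pos : 0 < c a := by
    have : 0 < (1 - a) ^ b := Real.rpow_pos_of_pos (by linarith) _
    exact mul_pos (Real.rpow_pos_of_pos ha _) this
  -- unique maximum at a
  have h'c : ∀ y ∈ s, y ≠ a → c y < c a := by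
    intro y hy hne
    rcases eq_or_lt_of_le hy.1 with h0 | h0
    · have : c y = 0 := by
        simp only [hc_def, ← h0, Real.zero_rpow ha.ne']
        ring
      rw [this]; exact hca_pos
    rcases eq_or_lt_of_le hy.2 with h1 | h1
    · have : c y = 0 := by
        simp only [hc_def, h1, sub_self, Real.zero_rpow hb.ne']
        ring
      rw [this]; exact hca_pos
    have hy1 : 0 < 1 - y := by linarith
    have hne' : y / a ≠ (1 - y) / b := by
      intro h
      apply hne
      field_simp at h
      nlinarith
    have hkey := strictConcaveOn_log_Ioi.2 (Set.mem_Ioi.2 (div_pos h0 ha))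
      (Set.mem_Ioi.2 (div_pos hy1 hb)) hne' ha hb hab
    have hsum : a • (y / a) + b • ((1 - y) / b) = 1 := by
      rw [smul_eq_mul, smul_eq_mul, mul_div_assoc', mul_div_assoc', mul_comm a y, mul_comm b (1 - y),
        mul_div_assoc, mul_div_assoc, div_self ha.ne', div_self hb.ne']
      ring
    rw [hsum, Real.log_one] at hkey
    have hlog : Real.log (c y) < Real.log (c a) := by
      have e1 : Real.log (c y) = a * Real.log y + b * Real.log (1 - y) := by
        rw [hc_def]
        rw [Real.log_mul (Real.rpow_pos_of_pos h0 _).ne' (Real.rpow_pos_of_pos hy1 _).ne',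
          Real.log_rpow h0, Real.log_rpow hy1]
      have e2 : Real.log (c a) = a * Real.log a + b * Real.log b := by
        show Real.log (a ^ a * (1 - a) ^ b) = _
        rw [hba]
        rw [Real.log_mul (Real.rpow_pos_of_pos ha _).ne' (Real.rpow_pos_of_pos hb _).ne',
          Real.log_rpow ha, Real.log_rpow hb]
      rw [e1, e2]
      rw [Real.log_div h0.ne' ha.ne', Real.log_div hy1.ne' hb.ne'] at hkey
      simp only [smul_eq_mul] at hkey
      nlinarith
    have hcy_pos : 0 < c y :=
      mul_pos (Real.rpow_pos_of_pos h0 _) (Real.rpow_pos_of_pos hy1 _)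
    exact (Real.log_lt_log_iff hcy_pos hca_pos).1 hlog
  -- pointwise identity
  have hpow : ∀ α : ℝ, ∀ x ∈ s, x ^ (a * α) * (1 - x) ^ (b * α) = c x ^ α := by
    intro α x hx
    have hx1 : (0:ℝ) ≤ 1 - x := by linarith [hx.2]
    rw [hc_def]
    rw [Real.mul_rpow (Real.rpow_nonneg hx.1 _) (Real.rpow_nonneg hx1 _),
      ← Real.rpow_mul hx.1, ← Real.rpow_mul hx1]
  -- B α positivity and integral formula
  set B : ℝ → ℝ := fun α => betaFn (a * α + 1) (b * α + 1) with hB_def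
  have hBpos : ∀ α : ℝ, 0 ≤ α → 0 < B α := by
    intro α hα
    have h1 : 0 < a * α + 1 := by nlinarith
    have h2 : 0 < b * α + 1 := by nlinarith
    exact div_pos (mul_pos (Real.Gamma_pos_of_pos h1) (Real.Gamma_pos_of_pos h2))
      (Real.Gamma_pos_of_pos (by linarith))
  have hBeq : ∀ α : ℝ, 0 ≤ α → B α = ∫ x in s, c x ^ α := by
    intro α hα
    show betaFn (a * α + 1) (b * α + 1) = _
    rw [betaFn_eq_integral (by nlinarith : (0:ℝ) < a * α + 1) (by nlinarith : (0:ℝ) < b * α + 1)]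
    apply MeasureTheory.setIntegral_congr_fun hs
    intro x hx
    have : a * α + 1 - 1 = a * α := by ring
    have h2 : b * α + 1 - 1 = b * α := by ring
    rw [this, h2]
    exact hpow α x hx
  have hIcα : ∀ α : ℝ, 0 ≤ α → ContinuousOn (fun x => c x ^ α) s :=
    fun α hα => hc_cont.rpow_const (fun x _ => Or.inr hα)
  have hIint : ∀ α : ℝ, 0 ≤ α → IntegrableOn (fun x => c x ^ α) s :=
    fun α hα => (hIcα α hα).integrableOn_compact isCompact_Icc
  -- the peak functions
  set φ : ℝ → ℝ → ℝ := fun α x => (B α)⁻¹ * c x ^ α with hφ_def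
  have main : Tendsto (fun α : ℝ => ∫ x in s, φ α x • g x) atTop (nhds (g a)) := by
    apply tendsto_setIntegral_peak_smul_of_integrableOn_of_tendsto hs hs
      (subset_refl s) self_mem_nhdsWithin (by simp [hs_def])
    · -- nonneg
      filter_upwards [eventually_ge_atTop (0:ℝ)] with α hα x hx
      exact mul_nonneg (inv_nonneg.2 (hBpos α hα).le) (Real.rpow_nonneg (hc_nonneg x hx) _)
    · -- uniform convergence away from a
      intro u u_open x₀u
      obtain ⟨t, t_pos, tx₀, ht⟩ : ∃ t, 0 ≤ t ∧ t < c a ∧ ∀ x ∈ s \ u, c x ≤ t := by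
        rcases eq_empty_or_nonempty (s \ u) with h | h
        · exact ⟨0, le_rfl, hca_pos, by simp [h]⟩
        obtain ⟨x, hx, h'x⟩ : ∃ x ∈ s \ u, ∀ y ∈ s \ u, c y ≤ c x :=
          IsCompact.exists_isMaxOn (isCompact_Icc.diff u_open) h (hc_cont.mono diff_subset)
        refine ⟨c x, hc_nonneg x hx.1, h'c x hx.1 ?_, h'x⟩
        rintro rfl
        exact hx.2 x₀u
      obtain ⟨t', tt', t'x₀⟩ : ∃ t', t < t' ∧ t' < c a := exists_between tx₀
      have t'_pos : 0 < t' := t_pos.trans_lt tt'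
      obtain ⟨v, v_open, x₀_v, hv⟩ : ∃ v : Set ℝ, IsOpen v ∧ a ∈ v ∧ v ∩ s ⊆ c ⁻¹' Ioi t' :=
        _root_.continuousOn_iff.1 hc_cont a haI (Ioi t') isOpen_Ioi t'x₀
      have hμv : 0 < volume (v ∩ s) := by
        have hsub : v ∩ Ioo (0:ℝ) 1 ⊆ v ∩ s :=
          inter_subset_inter_right _ Ioo_subset_Icc_self
        have hopen : IsOpen (v ∩ Ioo (0:ℝ) 1) := v_open.inter isOpen_Ioo
        have hne : (v ∩ Ioo (0:ℝ) 1).Nonempty := ⟨a, x₀_v, ha, ha1⟩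
        exact lt_of_lt_of_le (hopen.measure_pos volume hne) (measure_mono hsub)
      have hμv_fin : volume (v ∩ s) < ⊤ :=
        lt_of_le_of_lt (measure_mono inter_subset_right) isCompact_Icc.measure_lt_top
      have hμvr : 0 < (volume (v ∩ s)).toReal := ENNReal.toReal_pos hμv.ne' hμv_fin.ne
      have M : ∀ α : ℝ, 0 ≤ α → ∀ x ∈ s \ u,
          φ α x ≤ (volume (v ∩ s)).toReal⁻¹ * (t / t') ^ α := by
        intro α hα x hx
        have hBlow : t' ^ α * (volume (v ∩ s)).toReal ≤ B α := by
          rw [hBeq α hα]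
          calc t' ^ α * (volume (v ∩ s)).toReal
              = ∫ _ in v ∩ s, t' ^ α := by
                simp [Measure.restrict_apply, (v_open.measurableSet.inter hs), mul_comm, measureReal_def]
            _ ≤ ∫ y in v ∩ s, c y ^ α := by
                apply setIntegral_mono_on
                · exact integrableOn_const hμv_fin.ne
                · exact (hIint α hα).mono inter_subset_right le_rfl
                · exact v_open.measurableSet.inter hs
                · intro y hy
                  exact Real.rpow_le_rpow t'_pos.le (le_of_lt (hv hy)) hα
            _ ≤ ∫ y in s, c y ^ α := by
                apply setIntegral_mono_set (hIint α hα)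
                · filter_upwards [ae_restrict_mem hs] with y hy
                  exact Real.rpow_nonneg (hc_nonneg y hy) _
                · exact Eventually.of_forall inter_subset_right
        have hcx : c x ^ α ≤ t ^ α := Real.rpow_le_rpow (hc_nonneg x hx.1) (ht x hx) hα
        have hBpos' := hBpos α hα
        have ht'pos : 0 < t' ^ α := Real.rpow_pos_of_pos t'_pos _
        calc φ α x = c x ^ α / B α := by rw [hφ_def]; ring
          _ ≤ t ^ α / (t' ^ α * (volume (v ∩ s)).toReal) := by
              exact div_le_div₀ (Real.rpow_nonneg t_pos _) hcx (mul_pos ht'pos hμvr) hBlow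
          _ = (volume (v ∩ s)).toReal⁻¹ * (t / t') ^ α := by
              rw [Real.div_rpow t_pos t'_pos.le, inv_mul_eq_div, div_div]
      have N : Tendsto (fun α : ℝ => (volume (v ∩ s)).toReal⁻¹ * (t / t') ^ α) atTop
          (nhds ((volume (v ∩ s)).toReal⁻¹ * 0)) := by
        apply Tendsto.mul tendsto_const_nhds
        apply tendsto_rpow_atTop_of_base_lt_one
        · have : (0:ℝ) ≤ t / t' := div_nonneg t_pos t'_pos.le
          linarith
        · exact (div_lt_one t'_pos).2 tt'
      rw [mul_zero] at N
      refine Metric.tendstoUniformlyOn_iff.2 fun ε εpos => ?_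
      filter_upwards [(tendsto_order.1 N).2 ε εpos, eventually_ge_atTop (0:ℝ)] with α hα h'α x hx
      have hφnn : 0 ≤ φ α x :=
        mul_nonneg (inv_nonneg.2 (hBpos α h'α).le) (Real.rpow_nonneg (hc_nonneg x hx.1) _)
      simp only [Pi.zero_apply, dist_zero_left, Real.norm_of_nonneg hφnn]
      exact (M α h'α x hx).trans_lt hα
    · -- integral tends to 1
      apply tendsto_const_nhds.congr'
      filter_upwards [eventually_ge_atTop (0:ℝ)] with α hα
      rw [hφ_def]
      simp only
      rw [MeasureTheory.integral_const_mul, ← hBeq α hα, inv_mul_cancel₀ (hBpos α hα).ne']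
    · -- measurability
      filter_upwards [eventually_ge_atTop (0:ℝ)] with α hα
      exact (continuousOn_const.mul (hIcα α hα)).aestronglyMeasurable hs
    · exact hg.integrableOn_compact isCompact_Icc
    · exact hg a haI
  apply main.congr'
  filter_upwards [eventually_ge_atTop (0:ℝ)] with α hα
  apply MeasureTheory.setIntegral_congr_fun hs
  intro x hx
  show (B α)⁻¹ * c x ^ α * g x =
    x ^ (a * α) * (1 - x) ^ (b * α) / B α * g x
  rw [hpow α x hx]
  ring
end

section
/- Consider two arms with reward functions r_1(p) = p/(1-ε) for p ≤ 1-ε and r_1(p) = 2 - ε - p for p ≥ 1-ε, and r_2(p) = p/(2ε) for p ≤ ε and r_2(p) = -p/2 + (1+ε)/2 for p ≥ ε, where ε ∈ (0, 1/2). Then the function U(p) = p·r_1(p) + (1-p)·r_2(1-p) over p ∈ [0,1] is uniquely maximized at p = 1-ε; i.e., the mixed strategy (1-ε, ε) is the unique optimizer of ∑_k p_k r_k(p_k) over the 1-dimensional simplex. -/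
/-- In the two-arm instance of Example 1, the mixed strategy `(1-ε, ε)` is the unique
maximizer of `p ↦ p·r₁(p) + (1-p)·r₂(1-p)` over `p ∈ [0,1]`. -/
theorem two_arm_instance_unique_optimum
    (ε : ℝ) (hε0 : 0 < ε) (hε : ε < 1 / 2)
    (r1 r2 : ℝ → ℝ)
    (hr1a : ∀ p : ℝ, p ≤ 1 - ε → r1 p = p / (1 - ε))
    (hr1b : ∀ p : ℝ, 1 - ε ≤ p → r1 p = 2 - ε - p)
    (hr2a : ∀ p : ℝ, p ≤ ε → r2 p = p / (2 * ε))
    (hr2b : ∀ p : ℝ, ε ≤ p → r2 p = -p / 2 + (1 + ε) / 2) :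
    ∀ p ∈ Set.Icc (0:ℝ) 1, p ≠ 1 - ε →
      p * r1 p + (1 - p) * r2 (1 - p) < (1 - ε) * r1 (1 - ε) + ε * r2 ε := by
  intro p hp hpne
  obtain ⟨hp0, hp1⟩ := hp
  have h1ε : (0:ℝ) < 1 - ε := by linarith
  have hne : (1 - ε) ≠ 0 := ne_of_gt h1ε
  rw [hr1a (1 - ε) le_rfl, hr2b ε le_rfl, div_self hne]
  rcases le_or_gt p (1 - ε) with h | h
  · have hplt : p < 1 - ε := lt_of_le_of_ne h hpne
    rw [hr1a p h, hr2b (1 - p) (by linarith)]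
    have key : p * (p / (1 - ε)) = p * p / (1 - ε) := (mul_div_assoc p p (1 - ε)).symm
    have hlt : p * p / (1 - ε) <
        (1 - ε) * 1 + ε * (-ε / 2 + (1 + ε) / 2)
          - (1 - p) * (-(1 - p) / 2 + (1 + ε) / 2) := by
      rw [div_lt_iff₀ h1ε]
      nlinarith [mul_nonneg (sub_pos.mpr hplt).le hp0, sub_pos.mpr hplt,
        mul_pos (sub_pos.mpr hplt) h1ε]
    linarith
  · rw [hr1b p h.le, hr2a (1 - p) (by linarith)]
    have h2ε : (0:ℝ) < 2 * ε := by linarith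
    have key : (1 - p) * ((1 - p) / (2 * ε)) = (1 - p) * (1 - p) / (2 * ε) :=
      (mul_div_assoc _ _ _).symm
    have hlt : (1 - p) * (1 - p) / (2 * ε) <
        (1 - ε) * 1 + ε * (-ε / 2 + (1 + ε) / 2) - p * (2 - ε - p) := by
      rw [div_lt_iff₀ h2ε]
      nlinarith [mul_nonneg (sub_pos.mpr h).le (by linarith : (0:ℝ) ≤ 1 - p),
        sub_pos.mpr h, mul_pos (sub_pos.mpr h) hε0]
    linarith
end
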